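/- arXiv:2111.04806 — 5 statements merged into one kernel-verified Lean document; each statement's English description precedes it below -/
import Mathlib

section
/- Let N ≥ 2 be an integer, m > 1, σ ∈ (−2, 0) and 1 < p < p_c(σ) := 1 − σ(m−1)/2. Let (X, Y, Z) : [η₀, b) → ℝ³ be a differentiable solution of the system Ẋ = X[(m−1)Y − 2X], Ẏ = −Y² − (β/α)Y + X − N X Y − X Z, Ż = Z[(p−1)Y + σX], with X(η) > 0 and Z(η) > 0 for all η ∈ [η₀, b). If (m−1)Y(η₀) − 2X(η₀) < 0 and (p−1)Y(η₀) + σX(η₀) < 0, then (m−1)Y(η) − 2X(η) < 0 and (p−1)Y(η) + σX(η) < 0 for all η ∈ [η₀, b); consequently X and Z are strictly decreasing on [η₀, b). -/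
open Real Filter Set Topology

/-!
Let `F = (m-1)Y - 2X`. Where `F = 0` we have `Ẋ = 0` and `Y = 2X/(m-1) > 0`, so
`Ḟ = (m-1)Ẏ < 0`: indeed `-Y² - (β/α)Y + X = -Y(Y + β/α - (m-1)/2) < 0` because
`β/α = (m-p)/(σ+2) > (m-1)/2` is equivalent to `p < p_c`. Hence `F` stays negative. Inside
`F < 0`, the condition `p < p_c` also makes `(p-1)Y + σX` negative, and these two quantities
are the logarithmic derivatives of `X` and `Z`.
-/

/-- By the fencing theorem `F ≤ 0`; an interior zero would then be a local maximum, forcing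
`F' = 0` there. -/
theorem neg_on_Ico_of_deriv_neg_at_zero {F F' : ℝ → ℝ} {a b : ℝ}
    (hF : ∀ x ∈ Ico a b, HasDerivWithinAt F (F' x) (Ico a b) x) (ha : F a < 0)
    (hzero : ∀ x ∈ Ico a b, F x = 0 → F' x < 0) :
    ∀ x ∈ Ico a b, F x < 0 := by
  have hle : ∀ x ∈ Ico a b, F x ≤ 0 := fun x hx ↦
    image_le_of_deriv_right_lt_deriv_boundary' (B := 0) (B' := 0)
      (fun y hy ↦ (hF y ⟨hy.1, hy.2.trans_lt hx.2⟩).continuousWithinAt.mono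
        (Icc_subset_Ico_right hx.2))
      (fun y hy ↦ (hF y ⟨hy.1, hy.2.trans hx.2⟩).mono_of_mem_nhdsWithin
        (Ico_mem_nhdsGE_of_mem ⟨hy.1, hy.2.trans hx.2⟩))
      ha.le continuousOn_const (fun _ _ ↦ hasDerivWithinAt_const _ _ _)
      (fun y hy ↦ hzero y ⟨hy.1, hy.2.trans hx.2⟩) ⟨hx.1, le_rfl⟩
  intro x hx
  refine (hle x hx).lt_of_ne fun hx0 ↦ ?_
  rcases hx.1.eq_or_lt with rfl | hax
  · exact ha.ne hx0
  have hnhds : Ico a b ∈ 𝓝 x := Ico_mem_nhds hax hx.2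
  have hmax : IsLocalMax F x :=
    mem_of_superset hnhds fun y hy ↦ hx0 ▸ hle y hy
  exact (hzero x hx hx0).ne (hmax.hasDerivAt_eq_zero ((hF x hx).hasDerivAt hnhds))

theorem strictAntiOn_Ico_of_hasDerivWithinAt_neg {f f' : ℝ → ℝ} {a b : ℝ}
    (hf : ∀ x ∈ Ico a b, HasDerivWithinAt f (f' x) (Ico a b) x)
    (hf' : ∀ x ∈ Ico a b, f' x < 0) :
    StrictAntiOn f (Ico a b) := by
  have hIoo : ∀ x ∈ Ioo a b, x ∈ Ico a b := fun x hx ↦ Ioo_subset_Ico_self hx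
  refine strictAntiOn_of_hasDerivWithinAt_neg (f' := f') (convex_Ico a b)
    (fun x hx ↦ (hf x hx).continuousWithinAt) (fun x hx ↦ ?_) (fun x hx ↦ ?_)
  · rw [interior_Ico] at hx ⊢
    exact (hf x (hIoo x hx)).mono Ioo_subset_Ico_self
  · rw [interior_Ico] at hx
    exact hf' x (hIoo x hx)

section ProfileSystem

variable {m σ p : ℝ}

theorem sub_one_div_two_lt_of_lt_critical (hσ : -2 < σ) (hp : p < 1 - σ * (m - 1) / 2) :
    (m - 1) / 2 < (m - p) / (σ + 2) := by
  rw [div_lt_div_iff₀ two_pos (by linarith)]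
  linarith

theorem deriv_neg_on_boundary {N q X Y Z : ℝ} (hm : 1 < m) (hq : (m - 1) / 2 < q)
    (hN : 0 ≤ N) (hX : 0 < X) (hZ : 0 < Z) (hY : (m - 1) * Y - 2 * X = 0) :
    (m - 1) * (-Y ^ 2 - q * Y + X - N * X * Y - X * Z) - 2 * (X * ((m - 1) * Y - 2 * X)) < 0 := by
  have hXY : X = (m - 1) / 2 * Y := by linarith
  have hYpos : 0 < Y := by nlinarith
  have hdY : -Y ^ 2 - q * Y + X - N * X * Y - X * Z < 0 := by
    nlinarith [mul_pos hYpos (sub_pos.2 hq), mul_pos hX hZ,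
      mul_nonneg (mul_nonneg hN hX.le) hYpos.le]
  rw [hY, mul_zero, mul_zero, sub_zero]
  exact mul_neg_of_pos_of_neg (by linarith) hdY

theorem growth_rate_Z_neg_of_growth_rate_X_neg {X Y : ℝ} (hm : 1 < m) (hp1 : 1 < p)
    (hp2 : p < 1 - σ * (m - 1) / 2) (hX : 0 < X) (hY : (m - 1) * Y - 2 * X < 0) :
    (p - 1) * Y + σ * X < 0 := by
  have hD : 0 < -(σ * (m - 1) + 2 * (p - 1)) := by linarith
  nlinarith [mul_pos (sub_pos.2 hp1) (neg_pos.2 hY), mul_pos hX hD]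

end ProfileSystem

theorem invariant_region_X_Z_decreasing_general
    (N : ℕ) (m σ p α β : ℝ)
    (hm : 1 < m) (hσ1 : -2 < σ)
    (hp1 : 1 < p) (hp2 : p < 1 - σ * (m - 1) / 2)
    (hα : α = -(σ + 2) / (σ * (m - 1) + 2 * (p - 1)))
    (hβ : β = -(m - p) / (σ * (m - 1) + 2 * (p - 1)))
    (η₀ b : ℝ) (X Y Z : ℝ → ℝ)
    (hX : ∀ η ∈ Set.Ico η₀ b,
      HasDerivWithinAt X (X η * ((m - 1) * Y η - 2 * X η)) (Set.Ico η₀ b) η)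
    (hY : ∀ η ∈ Set.Ico η₀ b,
      HasDerivWithinAt Y
        (-(Y η) ^ 2 - β / α * Y η + X η - (N : ℝ) * X η * Y η - X η * Z η)
        (Set.Ico η₀ b) η)
    (hZ : ∀ η ∈ Set.Ico η₀ b,
      HasDerivWithinAt Z (Z η * ((p - 1) * Y η + σ * X η)) (Set.Ico η₀ b) η)
    (hXpos : ∀ η ∈ Set.Ico η₀ b, 0 < X η)
    (hZpos : ∀ η ∈ Set.Ico η₀ b, 0 < Z η)
    (hinit1 : (m - 1) * Y η₀ - 2 * X η₀ < 0) :
    (∀ η ∈ Set.Ico η₀ b,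
      (m - 1) * Y η - 2 * X η < 0 ∧ (p - 1) * Y η + σ * X η < 0) ∧
    StrictAntiOn X (Set.Ico η₀ b) ∧ StrictAntiOn Z (Set.Ico η₀ b) := by
  have hq : (m - 1) / 2 < β / α := by
    rw [hα, hβ, div_div_div_cancel_right₀ (by linarith), neg_div_neg_eq]
    exact sub_one_div_two_lt_of_lt_critical hσ1 hp2
  have hF : ∀ η ∈ Ico η₀ b, (m - 1) * Y η - 2 * X η < 0 :=
    neg_on_Ico_of_deriv_neg_at_zero
      (fun η hη ↦ ((hY η hη).const_mul (m - 1)).sub ((hX η hη).const_mul 2)) hinit1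
      (fun η hη ↦ deriv_neg_on_boundary hm hq (Nat.cast_nonneg N) (hXpos η hη) (hZpos η hη))
  have hG : ∀ η ∈ Ico η₀ b, (p - 1) * Y η + σ * X η < 0 :=
    fun η hη ↦ growth_rate_Z_neg_of_growth_rate_X_neg hm hp1 hp2 (hXpos η hη) (hF η hη)
  exact ⟨fun η hη ↦ ⟨hF η hη, hG η hη⟩,
    strictAntiOn_Ico_of_hasDerivWithinAt_neg hX
      (fun η hη ↦ mul_neg_of_pos_of_neg (hXpos η hη) (hF η hη)),
    strictAntiOn_Ico_of_hasDerivWithinAt_neg hZ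
      (fun η hη ↦ mul_neg_of_pos_of_neg (hZpos η hη) (hG η hη))⟩

/-- **Invariant region and monotonicity of `X` and `Z` along trajectories.**
For the autonomous system associated to the self-similar profile equation,
if a trajectory with `X > 0`, `Z > 0` starts in the region where
`(m-1)Y - 2X < 0` and `(p-1)Y + σX < 0`, it stays there, and consequently
`X` and `Z` are strictly decreasing along it. -/
theorem invariant_region_X_Z_decreasing
    (N : ℕ) (hN : 2 ≤ N) (m σ p α β : ℝ)
    (hm : 1 < m) (hσ1 : -2 < σ) (hσ2 : σ < 0)
    (hp1 : 1 < p) (hp2 : p < 1 - σ * (m - 1) / 2)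
    (hα : α = -(σ + 2) / (σ * (m - 1) + 2 * (p - 1)))
    (hβ : β = -(m - p) / (σ * (m - 1) + 2 * (p - 1)))
    (η₀ b : ℝ) (hηb : η₀ < b) (X Y Z : ℝ → ℝ)
    (hX : ∀ η ∈ Set.Ico η₀ b,
      HasDerivWithinAt X (X η * ((m - 1) * Y η - 2 * X η)) (Set.Ico η₀ b) η)
    (hY : ∀ η ∈ Set.Ico η₀ b,
      HasDerivWithinAt Y
        (-(Y η) ^ 2 - β / α * Y η + X η - (N : ℝ) * X η * Y η - X η * Z η)
        (Set.Ico η₀ b) η)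
    (hZ : ∀ η ∈ Set.Ico η₀ b,
      HasDerivWithinAt Z (Z η * ((p - 1) * Y η + σ * X η)) (Set.Ico η₀ b) η)
    (hXpos : ∀ η ∈ Set.Ico η₀ b, 0 < X η)
    (hZpos : ∀ η ∈ Set.Ico η₀ b, 0 < Z η)
    (hinit1 : (m - 1) * Y η₀ - 2 * X η₀ < 0)
    (hinit2 : (p - 1) * Y η₀ + σ * X η₀ < 0) :
    (∀ η ∈ Set.Ico η₀ b,
      (m - 1) * Y η - 2 * X η < 0 ∧ (p - 1) * Y η + σ * X η < 0) ∧
    StrictAntiOn X (Set.Ico η₀ b) ∧ StrictAntiOn Z (Set.Ico η₀ b) :=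
  invariant_region_X_Z_decreasing_general N m σ p α β hm hσ1 hp1 hp2 hα hβ η₀ b X Y Z hX hY hZ hXpos
    hZpos hinit1
end

section
/- Let N ≥ 2 be an integer, m > 1, σ ∈ (−2, 0) and 1 < p < p_c(σ) := 1 − σ(m−1)/2. There is no positive, twice continuously differentiable solution f of the profile ODE (f^m)'' + ((N−1)/ξ)(f^m)' − α f + β ξ f' + ξ^σ f^p = 0 on an interval (0, R), R > 0, satisfying simultaneously, as ξ → 0⁺: ξ^σ f(ξ)^{p−1} → ∞, ξ^{−(σ+2)} f(ξ)^{m−p} → 0, and ξ^{−(1+σ)} f(ξ)^{m−p−1} f'(ξ) → 0. -/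
/-!
In terms of the elasticity `W = ξ f' / f`, the profile equation reads
`ξ W' = (2 - N) W - m W² + (α - β W - A) / (m A B)` with `A = ξ^σ f^(p-1)` and
`B = ξ^(-(σ+2)) f^(m-p)`. Near `0` we have `A ≥ 2α` and `B ≤ 1 / (2m)`, so wherever `W ≥ 0`
this gives the Riccati inequality `ξ W' ≤ -(m W² + 1)`.

If `W < 0` all the way down to `0`, then `f` is decreasing and `B` stays away from `0`.
Otherwise `W ≥ 0` at some `ξ₁`, hence on all of `(0, ξ₁]`, since `W` can only cross `0`
downwards; then `arctan (√m W) + √m log ξ` is nonincreasing on `(0, ξ₁]`, which pushes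
`arctan (√m W)` above `π / 2` at `ξ₁ e^(-π/√m)`.
-/

open Real Filter Set Topology

theorem nonneg_of_hasDerivAt_neg_of_eq_zero {W W' : ℝ → ℝ} {a b : ℝ}
    (hW : ∀ x ∈ Icc a b, HasDerivAt W (W' x) x) (hb : 0 ≤ W b)
    (hzero : ∀ x ∈ Icc a b, W x = 0 → W' x < 0) : ∀ x ∈ Icc a b, 0 ≤ W x := by
  have hrefl : ∀ t ∈ Icc (-b) (-a), HasDerivAt (fun t => -W (-t)) (W' (-t)) t := by
    intro t ht
    have h : HasDerivAt (fun t => W (-t)) (W' (-t) * -1) t :=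
      (hW (-t) ⟨by linarith [ht.2], by linarith [ht.1]⟩).comp t (hasDerivAt_neg t)
    have h' := h.neg
    rwa [mul_neg_one, neg_neg] at h'
  have hle := image_le_of_deriv_right_lt_deriv_boundary (a := -b) (b := -a)
    (B := fun _ => 0) (B' := fun _ => 0)
    (fun t ht => (hrefl t ht).continuousAt.continuousWithinAt)
    (fun t ht => (hrefl t (Ico_subset_Icc_self ht)).hasDerivWithinAt)
    (by simpa using hb) (fun _ => hasDerivAt_const _ _)
    (fun t ht h0 => hzero (-t) ⟨by linarith [ht.2], by linarith [ht.1]⟩ (by linarith))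
  intro x hx
  simpa using hle (x := -x) ⟨by linarith [hx.2], by linarith [hx.1]⟩

theorem false_of_riccati_ineq_near_zero {W W' : ℝ → ℝ} {c b : ℝ} (hc : 0 < c) (hb : 0 < b)
    (hW : ∀ x ∈ Ioc 0 b, HasDerivAt W (W' x) x)
    (hle : ∀ x ∈ Ioc 0 b, W' x ≤ -(c * W x ^ 2 + 1) / x) : False := by
  set k := √c
  have hk : 0 < k := sqrt_pos.2 hc
  have hg : ∀ x ∈ Ioc 0 b, HasDerivAt (fun y => arctan (k * W y) + k * log y)
      (1 / (1 + (k * W x) ^ 2) * (k * W' x) + k * x⁻¹) x := fun x hx =>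
    ((hW x hx).const_mul k).arctan.add ((hasDerivAt_log hx.1.ne').const_mul k)
  have hanti : AntitoneOn (fun y => arctan (k * W y) + k * log y) (Ioc 0 b) := by
    refine antitoneOn_of_deriv_nonpos (convex_Ioc 0 b)
      (fun x hx => (hg x hx).continuousAt.continuousWithinAt) (fun x hx => ?_) fun x hx => ?_
      <;> rw [interior_Ioc] at hx
    · exact (hg x (Ioo_subset_Ioc_self hx)).differentiableAt.differentiableWithinAt
    rw [(hg x (Ioo_subset_Ioc_self hx)).deriv]
    have hpos : 0 < 1 + c * W x ^ 2 := by positivity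
    have hx0 : x ≠ 0 := hx.1.ne'
    have hsum : W' x * x + (c * W x ^ 2 + 1) ≤ 0 := by
      have := hle x (Ioo_subset_Ioc_self hx)
      rw [le_div_iff₀ hx.1] at this
      linarith
    calc 1 / (1 + (k * W x) ^ 2) * (k * W' x) + k * x⁻¹
        = k * (W' x * x + (c * W x ^ 2 + 1)) / ((1 + c * W x ^ 2) * x) := by
          rw [mul_pow, sq_sqrt hc.le]
          field_simp
          ring
      _ ≤ 0 := div_nonpos_of_nonpos_of_nonneg (mul_nonpos_of_nonneg_of_nonpos hk.le hsum)
          (mul_pos hpos hx.1).le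
  set x := b * exp (-(π / k))
  have hx : x ∈ Ioc 0 b := ⟨mul_pos hb (exp_pos _), mul_le_of_le_one_right hb.le
    (exp_le_one_iff.2 (neg_nonpos.2 (by positivity)))⟩
  have h := hanti hx ⟨hb, le_rfl⟩ hx.2
  have hlog : k * log x = k * log b - π := by
    rw [log_mul hb.ne' (exp_pos _).ne', log_exp]
    field_simp
    ring
  simp only [hlog] at h
  linarith [arctan_lt_pi_div_two (k * W x), neg_pi_div_two_lt_arctan (k * W b)]

theorem neg_of_riccati_ineq_near_zero {W W' : ℝ → ℝ} {c δ : ℝ} (hc : 0 < c)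
    (hW : ∀ x ∈ Ioo 0 δ, HasDerivAt W (W' x) x)
    (hle : ∀ x ∈ Ioo 0 δ, 0 ≤ W x → W' x ≤ -(c * W x ^ 2 + 1) / x) :
    ∀ x ∈ Ioo 0 δ, W x < 0 := by
  by_contra! ⟨ξ, hξ, hWξ⟩
  have hIoc : Ioc 0 ξ ⊆ Ioo 0 δ := fun x hx => ⟨hx.1, hx.2.trans_lt hξ.2⟩
  have hnonneg : ∀ x ∈ Ioc 0 ξ, 0 ≤ W x := fun x hx =>
    have hIcc : Icc x ξ ⊆ Ioo 0 δ := fun y hy => hIoc ⟨hx.1.trans_le hy.1, hy.2⟩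
    nonneg_of_hasDerivAt_neg_of_eq_zero (fun y hy => hW y (hIcc hy)) hWξ
      (fun y hy h0 => (hle y (hIcc hy) h0.ge).trans_lt
        (by rw [h0]; exact div_neg_of_neg_of_pos (by norm_num) (hIcc hy).1))
      x ⟨le_rfl, hx.2⟩
  exact false_of_riccati_ineq_near_zero hc hξ.1 (fun x hx => hW x (hIoc hx))
    fun x hx => hle x (hIoc hx) (hnonneg x hx)

theorem not_tendsto_rpow_mul_rpow_nhdsGT_zero {f : ℝ → ℝ} {δ a q : ℝ} (hδ : 0 < δ)
    (ha : a ≤ 0) (hq : 0 ≤ q) (hpos : ∀ x ∈ Ioo 0 δ, 0 < f x) (hf : AntitoneOn f (Ioo 0 δ)) :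
    ¬Tendsto (fun x => x ^ a * f x ^ q) (𝓝[>] 0) (𝓝 0) := by
  intro h
  have hmid : δ / 2 ∈ Ioo 0 δ := ⟨by positivity, by linarith⟩
  have hbound : ∀ᶠ x in 𝓝[>] 0, (δ / 2) ^ a * f (δ / 2) ^ q ≤ x ^ a * f x ^ q := by
    filter_upwards [Ioo_mem_nhdsGT hmid.1] with x hx
    have hxδ : x ∈ Ioo 0 δ := ⟨hx.1, hx.2.trans hmid.2⟩
    exact mul_le_mul (rpow_le_rpow_of_nonpos hx.1 hx.2.le ha)
      (rpow_le_rpow (hpos _ hmid).le (hf hxδ hmid hx.2.le) hq) (rpow_nonneg (hpos _ hmid).le q)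
      (rpow_nonneg hx.1.le a)
  exact (mul_pos (rpow_pos_of_pos hmid.1 a) (rpow_pos_of_pos (hpos _ hmid) q)).not_ge
    (ge_of_tendsto h hbound)

noncomputable def elasticity (f : ℝ → ℝ) (x : ℝ) : ℝ := x * deriv f x / f x

section TwiceDifferentiable

variable {f : ℝ → ℝ} {U : Set ℝ} {x : ℝ}

theorem ContDiffOn.hasDerivAt_deriv_of_two (hU : IsOpen U) (hf : ContDiffOn ℝ 2 f U)
    (hx : x ∈ U) : HasDerivAt f (deriv f x) x ∧ HasDerivAt (deriv f) (deriv (deriv f) x) x :=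
  ⟨((hf.differentiableOn (by norm_num)).differentiableAt (hU.mem_nhds hx)).hasDerivAt,
    (((hf.deriv_of_isOpen (m := 1) hU (by norm_num)).differentiableOn
      one_ne_zero).differentiableAt (hU.mem_nhds hx)).hasDerivAt⟩

theorem ContDiffOn.hasDerivAt_deriv_rpow_const (hU : IsOpen U) (hf : ContDiffOn ℝ 2 f U)
    (hne : ∀ y ∈ U, f y ≠ 0) (m : ℝ) (hx : x ∈ U) :
    HasDerivAt (deriv fun y => f y ^ m)
      (m * f x ^ (m - 1) * deriv (deriv f) x + m * (m - 1) * f x ^ (m - 2) * deriv f x ^ 2) x := by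
  have hderiv : deriv (fun y => f y ^ m) =ᶠ[𝓝 x] fun y => deriv f y * m * f y ^ (m - 1) :=
    eventually_of_mem (hU.mem_nhds hx) fun y hy =>
      ((hf.hasDerivAt_deriv_of_two hU hy).1.rpow_const (Or.inl (hne y hy))).deriv
  obtain ⟨hf₁, hf₂⟩ := hf.hasDerivAt_deriv_of_two hU hx
  refine (((hf₂.mul_const m).mul (hf₁.rpow_const (Or.inl (hne x hx)))).congr_of_eventuallyEq
    hderiv).congr_deriv ?_
  rw [show m - 1 - 1 = m - 2 by ring]
  ring

theorem ContDiffOn.hasDerivAt_elasticity (hU : IsOpen U) (hf : ContDiffOn ℝ 2 f U)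
    (hx : x ∈ U) (hfx : f x ≠ 0) :
    HasDerivAt (elasticity f)
      (((deriv f x + x * deriv (deriv f) x) * f x - x * deriv f x ^ 2) / f x ^ 2) x := by
  obtain ⟨hf₁, hf₂⟩ := hf.hasDerivAt_deriv_of_two hU hx
  exact (((hasDerivAt_id x).mul hf₂).div hf₁ hfx).congr_deriv
    (by simp only [Pi.mul_apply, id]; ring)

end TwiceDifferentiable

theorem antitoneOn_of_elasticity_neg {f : ℝ → ℝ} {a b : ℝ} (ha : 0 ≤ a)
    (hf : DifferentiableOn ℝ f (Ioo a b)) (hpos : ∀ x ∈ Ioo a b, 0 < f x)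
    (hW : ∀ x ∈ Ioo a b, elasticity f x < 0) : AntitoneOn f (Ioo a b) := by
  refine antitoneOn_of_deriv_nonpos (convex_Ioo a b) hf.continuousOn
    (by rwa [interior_Ioo]) fun x hx => ?_
  rw [interior_Ioo] at hx
  by_contra! h
  exact (hW x hx).not_ge (div_nonneg (mul_nonneg (ha.trans hx.1.le) h.le) (hpos x hx).le)

/-- The profile equation at a point, with `F, F₁, F₂` standing for `f, f', f''`, `u` for `f ^ m`,
and `A, B` for `ξ ^ σ * f ^ (p - 1)`, `ξ ^ (-(σ + 2)) * f ^ (m - p)`. -/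
theorem profile_riccati_identity {N m α β x F F₁ F₂ A B u : ℝ}
    (hF : F ≠ 0) (hm : m ≠ 0) (hu0 : u ≠ 0) (hu : A * B * x ^ 2 * F = u)
    (hode : m * (u / F) * F₂ + m * (m - 1) * (u / F ^ 2) * F₁ ^ 2
      + (N - 1) / x * (m * (u / F) * F₁) - α * F + β * x * F₁ + A * F = 0) :
    x * (((F₁ + x * F₂) * F - x * F₁ ^ 2) / F ^ 2)
      = (2 - N) * (x * F₁ / F) - m * (x * F₁ / F) ^ 2
        + (α - β * (x * F₁ / F) - A) / (m * A * B) := by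
  have hA : A ≠ 0 := by rintro rfl; exact hu0 (by rw [← hu]; ring)
  have hB : B ≠ 0 := by rintro rfl; exact hu0 (by rw [← hu]; ring)
  subst hu
  field_simp
  field_simp at hode
  linear_combination hode

theorem riccati_rhs_le {N m α β A B W : ℝ} (hN : 2 ≤ N) (hm : 0 < m) (hβ : 0 ≤ β)
    (hA : 0 < A) (hαA : 2 * α ≤ A) (hB0 : 0 < B) (hB : B ≤ 1 / (2 * m)) (hW : 0 ≤ W) :
    (2 - N) * W - m * W ^ 2 + (α - β * W - A) / (m * A * B) ≤ -(m * W ^ 2 + 1) := by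
  have hreact : (α - β * W - A) / (m * A * B) ≤ -1 := by
    rw [div_le_iff₀ (by positivity)]
    have h2mB : 2 * m * B ≤ 1 := by rwa [le_div_iff₀ (by positivity), mul_comm] at hB
    nlinarith [mul_nonneg hβ hW]
  nlinarith [mul_nonneg (sub_nonneg.2 hN) hW]

theorem deriv_elasticity_le_of_profileODE {N m σ p α β : ℝ} {f : ℝ → ℝ} {U : Set ℝ} {x : ℝ}
    (hN : 2 ≤ N) (hm : 0 < m) (hβ : 0 ≤ β) (hU : IsOpen U) (hf : ContDiffOn ℝ 2 f U)
    (hfpos : ∀ y ∈ U, 0 < f y) (hx : x ∈ U) (hx0 : 0 < x)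
    (hode : deriv (deriv fun y => f y ^ m) x + (N - 1) / x * deriv (fun y => f y ^ m) x
      - α * f x + β * x * deriv f x + x ^ σ * f x ^ p = 0)
    (hA : 2 * α ≤ x ^ σ * f x ^ (p - 1)) (hB : x ^ (-(σ + 2)) * f x ^ (m - p) ≤ 1 / (2 * m))
    (hW : 0 ≤ elasticity f x) :
    deriv (elasticity f) x ≤ -(m * elasticity f x ^ 2 + 1) / x := by
  have hF : 0 < f x := hfpos x hx
  have hd₁ : deriv (fun y => f y ^ m) x = m * (f x ^ m / f x) * deriv f x := by
    rw [((hf.hasDerivAt_deriv_of_two hU hx).1.rpow_const (Or.inl hF.ne')).deriv,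
      rpow_sub_one hF.ne']
    ring
  have hd₂ : deriv (deriv fun y => f y ^ m) x = m * (f x ^ m / f x) * deriv (deriv f) x
      + m * (m - 1) * (f x ^ m / f x ^ 2) * deriv f x ^ 2 := by
    rw [(hf.hasDerivAt_deriv_rpow_const hU (fun y hy => (hfpos y hy).ne') m hx).deriv,
      rpow_sub_one hF.ne', rpow_sub hF, rpow_two]
  have hreact : x ^ σ * f x ^ p = x ^ σ * f x ^ (p - 1) * f x := by
    rw [mul_assoc, ← rpow_add_one hF.ne', sub_add_cancel]
  have hAB : x ^ σ * f x ^ (p - 1) * (x ^ (-(σ + 2)) * f x ^ (m - p)) * x ^ 2 * f x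
      = f x ^ m := by
    calc _ = (x ^ σ * x ^ (-(σ + 2)) * x ^ (2 : ℝ)) * (f x ^ (p - 1) * f x ^ (m - p) * f x) := by
          rw [rpow_two]; ring
      _ = f x ^ m := by
          rw [← rpow_add hx0, ← rpow_add hx0, ← rpow_add hF, ← rpow_add_one hF.ne',
            show σ + -(σ + 2) + 2 = 0 by ring, show p - 1 + (m - p) + 1 = m by ring, rpow_zero,
            one_mul]
  have hid := profile_riccati_identity (N := N) (α := α) (β := β) (F₂ := deriv (deriv f) x)
    hF.ne' hm.ne' (rpow_pos_of_pos hF m).ne' hAB (by rwa [hd₁, hd₂, hreact] at hode)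
  rw [(hf.hasDerivAt_elasticity hU hx hF.ne').deriv, le_div_iff₀ hx0, mul_comm, hid]
  exact riccati_rhs_le hN hm hβ (by positivity) hA (by positivity) hB hW

theorem no_profile_Q4_at_zero_general
    (N : ℕ) (hN : 2 ≤ N) (m σ p α β : ℝ)
    (hm : 1 < m) (hσ1 : -2 < σ)
    (hp2 : p < 1 - σ * (m - 1) / 2)
    (hβ : β = -(m - p) / (σ * (m - 1) + 2 * (p - 1)))
    (R : ℝ) (hR : 0 < R) (f : ℝ → ℝ)
    (hf2 : ContDiffOn ℝ 2 f (Set.Ioo 0 R))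
    (hfpos : ∀ ξ ∈ Set.Ioo 0 R, 0 < f ξ)
    (hODE : ∀ ξ ∈ Set.Ioo 0 R,
      deriv (deriv (fun x => f x ^ m)) ξ
        + ((N : ℝ) - 1) / ξ * deriv (fun x => f x ^ m) ξ
        - α * f ξ + β * ξ * deriv f ξ + ξ ^ σ * f ξ ^ p = 0)
    (h1 : Tendsto (fun ξ => ξ ^ σ * f ξ ^ (p - 1)) (𝓝[>] 0) atTop)
    (h2 : Tendsto (fun ξ => ξ ^ (-(σ + 2)) * f ξ ^ (m - p)) (𝓝[>] 0) (𝓝 0)) :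
    False := by
  have hmp : 0 < m - p := by nlinarith
  have hβ0 : 0 ≤ β := hβ ▸ div_nonneg_of_nonpos (by linarith) (by nlinarith)
  obtain ⟨δ, hδ, hgood⟩ := mem_nhdsGT_iff_exists_Ioo_subset.1
    ((show ∀ᶠ x in 𝓝[>] 0, x ∈ Ioo 0 R from Ioo_mem_nhdsGT hR).and
      ((h1.eventually_ge_atTop (2 * α)).and
        (h2.eventually (eventually_le_nhds (by positivity : (0 : ℝ) < 1 / (2 * m))))))
  have hsub : Ioo 0 δ ⊆ Ioo 0 R := fun x hx => (hgood hx).1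
  have hWderiv : ∀ x ∈ Ioo 0 δ, HasDerivAt (elasticity f) (deriv (elasticity f) x) x :=
    fun x hx => (hf2.hasDerivAt_elasticity isOpen_Ioo (hsub hx)
      (hfpos x (hsub hx)).ne').differentiableAt.hasDerivAt
  have hriccati : ∀ x ∈ Ioo 0 δ, 0 ≤ elasticity f x →
      deriv (elasticity f) x ≤ -(m * elasticity f x ^ 2 + 1) / x := fun x hx hW =>
    deriv_elasticity_le_of_profileODE (by exact_mod_cast hN) (by linarith) hβ0 isOpen_Ioo hf2
      hfpos (hsub hx) hx.1 (hODE x (hsub hx)) (hgood hx).2.1 (hgood hx).2.2 hW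
  exact not_tendsto_rpow_mul_rpow_nhdsGT_zero hδ (by linarith) hmp.le
    (fun x hx => hfpos x (hsub hx))
    (antitoneOn_of_elasticity_neg le_rfl ((hf2.differentiableOn two_ne_zero).mono hsub)
      (fun x hx => hfpos x (hsub hx))
      (neg_of_riccati_ineq_near_zero (by linarith) hWderiv hriccati)) h2

/-- **No profiles connecting to `Q₄` as `ξ → 0⁺`.** There is no positive `C²`
solution of the profile ODE on an interval `(0, R)`, `R > 0`, such that, as
`ξ → 0⁺`, `ξ^σ f(ξ)^{p-1} → ∞`, `ξ^{-(σ+2)} f(ξ)^{m-p} → 0` and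
`ξ^{-(1+σ)} f(ξ)^{m-p-1} f'(ξ) → 0`. -/
theorem no_profile_Q4_at_zero
    (N : ℕ) (hN : 2 ≤ N) (m σ p α β : ℝ)
    (hm : 1 < m) (hσ1 : -2 < σ) (hσ2 : σ < 0)
    (hp1 : 1 < p) (hp2 : p < 1 - σ * (m - 1) / 2)
    (hα : α = -(σ + 2) / (σ * (m - 1) + 2 * (p - 1)))
    (hβ : β = -(m - p) / (σ * (m - 1) + 2 * (p - 1)))
    (R : ℝ) (hR : 0 < R) (f : ℝ → ℝ)
    (hf2 : ContDiffOn ℝ 2 f (Set.Ioo 0 R))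
    (hfpos : ∀ ξ ∈ Set.Ioo 0 R, 0 < f ξ)
    (hODE : ∀ ξ ∈ Set.Ioo 0 R,
      deriv (deriv (fun x => f x ^ m)) ξ
        + ((N : ℝ) - 1) / ξ * deriv (fun x => f x ^ m) ξ
        - α * f ξ + β * ξ * deriv f ξ + ξ ^ σ * f ξ ^ p = 0)
    (h1 : Tendsto (fun ξ => ξ ^ σ * f ξ ^ (p - 1)) (𝓝[>] 0) atTop)
    (h2 : Tendsto (fun ξ => ξ ^ (-(σ + 2)) * f ξ ^ (m - p)) (𝓝[>] 0) (𝓝 0))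
    (h3 : Tendsto (fun ξ => ξ ^ (-(1 + σ)) * f ξ ^ (m - p - 1) * deriv f ξ)
      (𝓝[>] 0) (𝓝 0)) :
    False :=
  no_profile_Q4_at_zero_general N hN m σ p α β hm hσ1 hp2 hβ R hR f hf2 hfpos hODE h1 h2
end

section
/- Let N ≥ 2 be an integer, m > 1, σ ∈ (−2, 0) and 1 < p < p_c(σ) := 1 − σ(m−1)/2, and consider the planar system ẏ = −(N−2)y + w − m y² − (β/α) y w, ẇ = w(2 − (m−1)y). Define the region R := {(y, w) : 0 < y < α/β, w > (m y² + (N−2)y)/(1 − (β/α)y)}. Then: (i) α/β < 2/(m−1); (ii) at every point of R one has ẏ > 0 and ẇ > 0; (iii) R is positively invariant: any solution (y, w) of the system with (y(t₀), w(t₀)) ∈ R satisfies (y(t), w(t)) ∈ R for all later times t in its maximal interval of existence; in particular y(t) < α/β for all such t; (iv) along such a solution, w(t) → +∞ as t approaches the right endpoint of the maximal interval of existence. -/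
open Real Filter Set Topology

/-- The interval `[t₀, b)` with `b` an extended real. -/
def solDom (t₀ : ℝ) (b : EReal) : Set ℝ := {t : ℝ | t₀ ≤ t ∧ (t : EReal) < b}

/-- A solution of the planar system `ẏ = -(N-2)y + w - m y² - (β/α) y w`,
`ẇ = w(2 - (m-1)y)` on the set `s`. -/
def IsSolYW (N : ℕ) (m α β : ℝ) (s : Set ℝ) (y w : ℝ → ℝ) : Prop :=
  ∀ t ∈ s,
    HasDerivWithinAt y
      (-(((N : ℝ)) - 2) * y t + w t - m * y t ^ 2 - β / α * y t * w t) s t ∧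
    HasDerivWithinAt w (w t * (2 - (m - 1) * y t)) s t

/-- The region `R = {(y, w) : 0 < y < α/β, w > (m y² + (N-2)y)/(1 - (β/α)y)}`. -/
def regionR (N : ℕ) (m α β : ℝ) : Set (ℝ × ℝ) :=
  {q : ℝ × ℝ | 0 < q.1 ∧ q.1 < α / β ∧
    (m * q.1 ^ 2 + ((N : ℝ) - 2) * q.1) / (1 - β / α * q.1) < q.2}

/-!
The first component of the field factors as `ẏ = (1 - (β/α) y) w - (m y² + (N - 2) y)`, so `R` is
the set of points with `0 < y < α/β` at which `ẏ > 0`; there `ẇ > 0` as well, because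
`α/β < 2/(m - 1)` is the identity `(m - 1) α = 2β - 1`. On the boundary pieces `y = 0`,
`y = α/β` and `ẏ = 0` the field points into `R` (on `ẏ = 0` the derivative of `ẏ` is
`(1 - (β/α) y) ẇ > 0`), so a first-exit-time argument makes `R` positively invariant, and `y`, `w`
increase along solutions in `R`. On an unbounded interval `ẇ ≥ w(t₀) (2 - (m - 1) α/β)` gives
linear growth of `w`; on a bounded one, a bounded `w` would make `(y, w)` converge at the endpoint,
and Picard–Lindelöf would extend the solution beyond it.
-/

theorem HasDerivWithinAt.nonpos_of_le_left {f : ℝ → ℝ} {f' a b : ℝ} (hab : a < b)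
    (hf : HasDerivWithinAt f f' (Ioo a b) b) (hle : ∀ t ∈ Ioo a b, f b ≤ f t) : f' ≤ 0 := by
  have : (𝓝[Ioo a b] b).NeBot := right_nhdsWithin_Ioo_neBot hab
  rw [hasDerivWithinAt_iff_tendsto_slope' (by simp)] at hf
  refine le_of_tendsto hf (eventually_nhdsWithin_of_forall fun t ht => ?_)
  rw [slope_comm]
  exact (slope_nonpos_iff_of_le ht.2.le).2 (hle t ht)

theorem forall_pos_of_deriv_pos_on_boundary {ι : Type*} [Finite ι] {G G' : ι → ℝ → ℝ}
    {a b : ℝ} (hab : a ≤ b)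
    (hG : ∀ i, ∀ t ∈ Icc a b, HasDerivWithinAt (G i) (G' i t) (Icc a b) t)
    (ha : ∀ i, 0 < G i a)
    (hboundary : ∀ t ∈ Icc a b, (∀ j, 0 ≤ G j t) → ∀ i, G i t = 0 → 0 < G' i t) :
    ∀ i, 0 < G i b := by
  by_contra! hb
  have hcont : ∀ i, ContinuousOn (G i) (Icc a b) := fun i t ht => (hG i t ht).continuousWithinAt
  set S := ⋃ i, Icc a b ∩ G i ⁻¹' Iic 0
  have hS : IsClosed S := isClosed_iUnion_of_finite fun i =>
    (hcont i).preimage_isClosed_of_isClosed isClosed_Icc isClosed_Iic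
  have hSbdd : BddBelow S := ⟨a, by simp +contextual [S, mem_lowerBounds]⟩
  obtain ⟨i, hbi⟩ := hb
  have hcS : sInf S ∈ S := hS.csInf_mem ⟨b, mem_iUnion.2 ⟨i, ⟨hab, le_rfl⟩, hbi⟩⟩ hSbdd
  set c := sInf S
  obtain ⟨i, hc, hci⟩ := mem_iUnion.1 hcS
  have hpos : ∀ t ∈ Ico a c, ∀ j, 0 < G j t := by
    intro t ht j
    by_contra! h
    exact ht.2.not_ge (csInf_le hSbdd (mem_iUnion.2 ⟨j, ⟨ht.1, ht.2.le.trans hc.2⟩, h⟩))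
  have hac : a < c := hc.1.lt_of_ne fun h => (ha i).not_ge (h ▸ hci)
  have hsub : Icc a c ⊆ Icc a b := Icc_subset_Icc_right hc.2
  have hnonneg : ∀ j, 0 ≤ G j c := by
    intro j
    have : (𝓝[Ico a c] c).NeBot := right_nhdsWithin_Ico_neBot hac
    refine ge_of_tendsto (((hcont j).mono hsub) c (right_mem_Icc.2 hac.le) |>.mono
      Ico_subset_Icc_self) (eventually_nhdsWithin_of_forall fun t ht => (hpos t ht j).le)
  have hzero : G i c = 0 := le_antisymm hci (hnonneg i)
  refine (hboundary c hc hnonneg i hzero).not_ge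
    (((hG i c hc).mono (Ioo_subset_Icc_self.trans hsub)).nonpos_of_le_left hac fun t ht => ?_)
  rw [hzero]
  exact (hpos t (Ioo_subset_Ico_self ht) i).le

theorem MonotoneOn.exists_tendsto_nhdsLT {f : ℝ → ℝ} {a b : ℝ} (hab : a < b)
    (hf : MonotoneOn f (Ico a b)) (hbdd : BddAbove (f '' Ico a b)) :
    ∃ L, Tendsto f (𝓝[<] b) (𝓝 L) := by
  have hmem : ∀ t ∈ Iio b, max t a ∈ Ico a b := fun t ht => ⟨le_max_right _ _, max_lt ht hab⟩
  have hmono : MonotoneOn (fun t => f (max t a)) (Iio b) := fun s hs t ht hst =>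
    hf (hmem s hs) (hmem t ht) (max_le_max_right a hst)
  have hbdd' : BddAbove ((fun t => f (max t a)) '' Iio b) :=
    hbdd.mono (by rintro _ ⟨t, ht, rfl⟩; exact mem_image_of_mem f (hmem t ht))
  refine ⟨_, (hmono.tendsto_nhdsLT hbdd').congr' ?_⟩
  filter_upwards [Ioo_mem_nhdsLT hab] with t ht
  rw [max_eq_left ht.1.le]

theorem MonotoneOn.tendsto_nhdsLT_atTop {f : ℝ → ℝ} {a b : ℝ} (hf : MonotoneOn f (Ico a b))
    (hbdd : ¬BddAbove (f '' Ico a b)) : Tendsto f (𝓝[<] b) atTop := by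
  refine tendsto_atTop.2 fun M => ?_
  obtain ⟨_, ⟨s, hs, rfl⟩, hMs⟩ := not_bddAbove_iff.1 hbdd M
  filter_upwards [Ioo_mem_nhdsLT hs.2] with t ht
  exact hMs.le.trans (hf hs ⟨hs.1.trans ht.1.le, ht.2⟩ ht.1.le)

theorem tendsto_atTop_of_le_hasDerivWithinAt_Ici {f f' : ℝ → ℝ} {a C : ℝ} (hC : 0 < C)
    (hf : ∀ t ∈ Ici a, HasDerivWithinAt f (f' t) (Ici a) t) (hf' : ∀ t ∈ Ioi a, C ≤ f' t) :
    Tendsto f atTop atTop := by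
  have hd : ∀ t ∈ Ici a, HasDerivWithinAt (fun t => f t - C * t) (f' t - C) (Ici a) t :=
    fun t ht => ((hf t ht).sub ((hasDerivWithinAt_id t _).const_mul C)).congr_deriv (by ring)
  have hmono : MonotoneOn (fun t => f t - C * t) (Ici a) := by
    refine monotoneOn_of_hasDerivWithinAt_nonneg (f' := fun t => f' t - C) (convex_Ici a)
      (fun t ht => (hd t ht).continuousWithinAt) (fun t ht => ?_) fun t ht => ?_
    · rw [interior_Ici] at ht ⊢
      exact (hd t (Ioi_subset_Ici_self ht)).mono Ioi_subset_Ici_self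
    · rw [interior_Ici] at ht
      linarith [hf' t ht]
  have hlin : Tendsto (fun t => f a + C * (t - a)) atTop atTop :=
    tendsto_atTop_add_const_left _ _
      ((tendsto_atTop_add_const_right _ _ tendsto_id).const_mul_atTop hC)
  refine tendsto_atTop_mono' atTop ?_ hlin
  filter_upwards [eventually_ge_atTop a] with t ht
  linarith [hmono self_mem_Ici ht ht]

theorem exists_extend_hasDerivWithinAt_Ico {E : Type*} [NormedAddCommGroup E] [NormedSpace ℝ E]
    [CompleteSpace E] {v : E → E} {γ : ℝ → E} {a b : ℝ} {x : E} (hab : a < b)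
    (hv : ContDiffAt ℝ 1 v x) (hγ : ∀ t ∈ Ico a b, HasDerivWithinAt γ (v (γ t)) (Ico a b) t)
    (hlim : Tendsto γ (𝓝[<] b) (𝓝 x)) :
    ∃ c > b, ∃ η : ℝ → E, EqOn η γ (Ico a b) ∧
      ∀ t ∈ Ico a c, HasDerivWithinAt η (v (η t)) (Ico a c) t := by
  obtain ⟨α, hα, ε, hε, hαsol⟩ :=
    hv.exists_forall_mem_closedBall_exists_eq_forall_mem_Ioo_hasDerivAt₀ b
  set η : ℝ → E := fun t => if t < b then γ t else α t
  have hηγ : EqOn η γ (Ico a b) := fun t ht => if_pos ht.2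
  have hηα : EqOn η α (Ici b) := fun t ht => if_neg (not_lt.2 ht)
  have hγint : ∀ t ∈ Ioo a b, HasDerivAt γ (v (γ t)) t := fun t ht =>
    (hγ t (Ioo_subset_Ico_self ht)).hasDerivAt (Ico_mem_nhds ht.1 ht.2)
  have hηint : ∀ t ∈ Ioo a b, HasDerivAt η (v (γ t)) t := fun t ht =>
    (hγint t ht).congr_of_eventuallyEq
      (eventuallyEq_of_mem (Ioo_mem_nhds ht.1 ht.2) (hηγ.mono Ioo_subset_Ico_self))
  have hleft : HasDerivWithinAt η (v x) (Iic b) b := by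
    refine hasDerivWithinAt_Iic_of_tendsto_deriv (s := Ioo a b)
      (fun t ht => (hηint t ht).differentiableAt.differentiableWithinAt) ?_ (Ioo_mem_nhdsLT hab) ?_
    · rw [ContinuousWithinAt, hηα self_mem_Ici, hα]
      exact (hlim.mono_left (nhdsWithin_mono _ Ioo_subset_Iio_self)).congr'
        (eventuallyEq_nhdsWithin_of_eqOn (hηγ.mono Ioo_subset_Ico_self)).symm
    · refine (hv.continuousAt.tendsto.comp hlim).congr' ?_
      filter_upwards [Ioo_mem_nhdsLT hab] with t ht
      exact (hηint t ht).deriv.symm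
  have hright : HasDerivWithinAt η (v x) (Ici b) b := by
    rw [← hα]
    exact (hαsol b ⟨by linarith, by linarith⟩).hasDerivWithinAt.congr hηα (hηα self_mem_Ici)
  refine ⟨b + ε, by linarith, η, hηγ, fun t ht => ?_⟩
  rcases lt_trichotomy t b with htb | rfl | hbt
  · rw [hηγ ⟨ht.1, htb⟩]
    refine ((hγ t ⟨ht.1, htb⟩).congr hηγ (hηγ ⟨ht.1, htb⟩)).mono_of_mem_nhdsWithin ?_
    exact mem_nhdsWithin.2 ⟨Iio b, isOpen_Iio, htb, fun s hs => ⟨hs.2.1, hs.1⟩⟩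
  · rw [hηα self_mem_Ici, hα]
    exact (hleft.union hright).mono (by rw [Iic_union_Ici]; exact subset_univ _)
  · rw [hηα hbt.le]
    refine ((hαsol t ⟨by linarith, ht.2⟩).congr_of_eventuallyEq ?_).hasDerivWithinAt
    exact eventuallyEq_of_mem (Ioi_mem_nhds hbt) fun s hs => hηα (mem_Ici.2 (le_of_lt hs))

noncomputable def planarField (N : ℕ) (m α β : ℝ) (q : ℝ × ℝ) : ℝ × ℝ :=
  (-((N : ℝ) - 2) * q.1 + q.2 - m * q.1 ^ 2 - β / α * q.1 * q.2, q.2 * (2 - (m - 1) * q.1))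

section PlanarSystem

variable {N : ℕ} {m α β : ℝ}

theorem contDiff_planarField : ContDiff ℝ 1 (planarField N m α β) := by
  unfold planarField
  fun_prop

theorem isSolYW_iff {s : Set ℝ} {y w : ℝ → ℝ} :
    IsSolYW N m α β s y w ↔
      ∀ t ∈ s, HasDerivWithinAt (fun t => (y t, w t)) (planarField N m α β (y t, w t)) s t := by
  refine forall₂_congr fun t _ => ⟨fun h => h.1.prodMk h.2, fun h => ⟨?_, ?_⟩⟩
  · exact hasFDerivAt_fst.comp_hasDerivWithinAt t h
  · exact hasFDerivAt_snd.comp_hasDerivWithinAt t h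

theorem planarField_fst_eq (q : ℝ × ℝ) :
    (planarField N m α β q).1 = (1 - β / α * q.1) * q.2 - (m * q.1 ^ 2 + ((N : ℝ) - 2) * q.1) := by
  simp only [planarField]
  ring

theorem one_sub_mul_pos (hα : 0 < α) (hβ : 0 < β) {y : ℝ} (hy : y < α / β) :
    0 < 1 - β / α * y := by
  rw [lt_div_iff₀ hβ] at hy
  rw [sub_pos, div_mul_eq_mul_div, div_lt_one hα]
  linarith

theorem two_sub_mul_pos (hm : 1 < m) (hcrit : α / β < 2 / (m - 1)) {y : ℝ} (hy : y ≤ α / β) :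
    0 < 2 - (m - 1) * y := by
  rw [lt_div_iff₀ (by linarith)] at hcrit
  nlinarith

theorem mem_regionR_iff (hα : 0 < α) (hβ : 0 < β) {q : ℝ × ℝ} :
    q ∈ regionR N m α β ↔ 0 < q.1 ∧ q.1 < α / β ∧ 0 < (planarField N m α β q).1 := by
  rw [planarField_fst_eq]
  refine and_congr_right fun _ => and_congr_right fun hq => ?_
  rw [div_lt_iff₀ (one_sub_mul_pos hα hβ hq), sub_pos, mul_comm q.2]

theorem snd_pos_of_mem_regionR (hN : 2 ≤ N) (hm : 0 < m) (hα : 0 < α) (hβ : 0 < β)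
    {q : ℝ × ℝ} (hq : q ∈ regionR N m α β) : 0 < q.2 := by
  have hN' : (2 : ℝ) ≤ N := by exact_mod_cast hN
  obtain ⟨h1, h2, h3⟩ := (mem_regionR_iff hα hβ).1 hq
  rw [planarField_fst_eq] at h3
  have := one_sub_mul_pos hα hβ h2
  nlinarith

theorem planarField_fst_neg_of_fst_eq (hN : 2 ≤ N) (hm : 0 < m) (hα : 0 < α) (hβ : 0 < β)
    {q : ℝ × ℝ} (hq : q.1 = α / β) : (planarField N m α β q).1 < 0 := by
  have hN' : (2 : ℝ) ≤ N := by exact_mod_cast hN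
  have hr : 0 < α / β := div_pos hα hβ
  have hk : β / α * (α / β) = 1 := by field_simp
  rw [planarField_fst_eq, hq, hk, sub_self, zero_mul]
  have : 0 ≤ ((N : ℝ) - 2) * (α / β) := mul_nonneg (by linarith) hr.le
  nlinarith [pow_pos hr 2]

theorem planarField_snd_pos (hm : 1 < m) (hcrit : α / β < 2 / (m - 1)) {q : ℝ × ℝ}
    (h1 : q.1 ≤ α / β) (h2 : 0 < q.2) : 0 < (planarField N m α β q).2 :=
  mul_pos h2 (two_sub_mul_pos hm hcrit h1)

theorem planarField_pos_of_mem_regionR (hN : 2 ≤ N) (hm : 1 < m) (hα : 0 < α) (hβ : 0 < β)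
    (hcrit : α / β < 2 / (m - 1)) {q : ℝ × ℝ} (hq : q ∈ regionR N m α β) :
    0 < (planarField N m α β q).1 ∧ 0 < (planarField N m α β q).2 :=
  ⟨((mem_regionR_iff hα hβ).1 hq).2.2, planarField_snd_pos hm hcrit hq.2.1.le
    (snd_pos_of_mem_regionR hN (by linarith) hα hβ hq)⟩

theorem IsSolYW.hasDerivWithinAt_planarField_fst {s : Set ℝ} {y w : ℝ → ℝ}
    (hsol : IsSolYW N m α β s y w) {t : ℝ} (ht : t ∈ s) :
    HasDerivWithinAt (fun τ => (planarField N m α β (y τ, w τ)).1)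
      ((1 - β / α * y t) * (planarField N m α β (y t, w t)).2 -
        (β / α * w t + 2 * m * y t + ((N : ℝ) - 2)) * (planarField N m α β (y t, w t)).1) s t := by
  obtain ⟨hy, hw⟩ := hsol t ht
  exact ((((hy.const_mul _).add hw).sub ((hy.pow 2).const_mul m)).sub
    ((hy.const_mul _).mul hw)).congr_deriv (by simp only [planarField]; ring)

theorem mem_regionR_of_isSolYW (hN : 2 ≤ N) (hm : 1 < m) (hα : 0 < α) (hβ : 0 < β)
    (hcrit : α / β < 2 / (m - 1)) {s : Set ℝ} {y w : ℝ → ℝ} (hsol : IsSolYW N m α β s y w)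
    {t₀ t : ℝ} (ht : t₀ ≤ t) (hsub : Icc t₀ t ⊆ s) (h₀ : (y t₀, w t₀) ∈ regionR N m α β) :
    (y t, w t) ∈ regionR N m α β := by
  have hw₀ := snd_pos_of_mem_regionR hN (by linarith) hα hβ h₀
  rw [mem_regionR_iff hα hβ] at h₀ ⊢
  set dy : ℝ → ℝ := fun τ => (planarField N m α β (y τ, w τ)).1
  set dw : ℝ → ℝ := fun τ => (planarField N m α β (y τ, w τ)).2
  -- `w > w t₀ / 2` joins the three defining inequalities of `R` so that the equilibrium `(0, 0)`
  -- is not on the boundary of the region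
  have hpos := forall_pos_of_deriv_pos_on_boundary (ι := Fin 4)
    (G := ![y, fun τ => α / β - y τ, dy, fun τ => w τ - w t₀ / 2])
    (G' := ![dy, fun τ => -dy τ,
      fun τ => (1 - β / α * y τ) * dw τ - (β / α * w τ + 2 * m * y τ + ((N : ℝ) - 2)) * dy τ, dw])
    ht ?_ ?_ ?_
  · simp only [Fin.forall_fin_succ, Fin.succ_zero_eq_one, Fin.succ_one_eq_two, Fin.reduceSucc,
      Matrix.cons_val] at hpos
    exact ⟨hpos.1, by linarith [hpos.2.1], hpos.2.2.1⟩
  · intro i τ hτ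
    obtain ⟨hy, hw⟩ := hsol τ (hsub hτ)
    fin_cases i <;> simp only [Fin.zero_eta, Fin.mk_one, Fin.reduceFinMk, Matrix.cons_val]
    · exact hy.mono hsub
    · exact (hy.mono hsub).const_sub _
    · exact (hsol.hasDerivWithinAt_planarField_fst (hsub hτ)).mono hsub
    · exact (hw.mono hsub).sub_const _
  · intro i
    fin_cases i <;> simp only [Fin.zero_eta, Fin.mk_one, Fin.reduceFinMk, Matrix.cons_val]
    · exact h₀.1
    · exact sub_pos.2 h₀.2.1
    · exact h₀.2.2
    · linarith
  · intro τ _ hnonneg i hi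
    simp only [Fin.forall_fin_succ, Fin.succ_zero_eq_one, Fin.succ_one_eq_two, Fin.reduceSucc,
      Matrix.cons_val] at hnonneg
    obtain ⟨hy₀, hyr, hdy, hw, -⟩ := hnonneg
    have hwpos : 0 < w τ := by linarith
    have hdw : 0 < dw τ := planarField_snd_pos hm hcrit (q := (y τ, w τ)) (by linarith) hwpos
    fin_cases i <;> simp only [Fin.zero_eta, Fin.mk_one, Fin.reduceFinMk, Matrix.cons_val] at hi ⊢
    · simpa [dy, planarField_fst_eq, hi] using hwpos
    · exact neg_pos.2 (planarField_fst_neg_of_fst_eq hN (by linarith) hα hβ (by simp; linarith))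
    · have hlt : y τ < α / β := (sub_nonneg.1 hyr).lt_of_ne fun h =>
        (planarField_fst_neg_of_fst_eq (q := (y τ, w τ)) hN (by linarith) hα hβ h).ne hi
      rw [hi, mul_zero, sub_zero]
      exact mul_pos (one_sub_mul_pos hα hβ hlt) hdw
    · exact hdw

theorem monotoneOn_of_isSolYW (hN : 2 ≤ N) (hm : 1 < m) (hα : 0 < α) (hβ : 0 < β)
    (hcrit : α / β < 2 / (m - 1)) {s : Set ℝ} (hs : Convex ℝ s) {y w : ℝ → ℝ}
    (hsol : IsSolYW N m α β s y w) (hR : ∀ t ∈ s, (y t, w t) ∈ regionR N m α β) :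
    MonotoneOn y s ∧ MonotoneOn w s := by
  have hpos := fun t ht => planarField_pos_of_mem_regionR hN hm hα hβ hcrit (hR t ht)
  exact ⟨monotoneOn_of_hasDerivWithinAt_nonneg hs
      (fun t ht => (hsol t ht).1.continuousWithinAt)
      (fun t ht => (hsol t (interior_subset ht)).1.mono interior_subset)
      fun t ht => (hpos t (interior_subset ht)).1.le,
    monotoneOn_of_hasDerivWithinAt_nonneg hs
      (fun t ht => (hsol t ht).2.continuousWithinAt)
      (fun t ht => (hsol t (interior_subset ht)).2.mono interior_subset)
      fun t ht => (hpos t (interior_subset ht)).2.le⟩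

theorem tendsto_atTop_of_isSolYW_Ici (hN : 2 ≤ N) (hm : 1 < m) (hα : 0 < α) (hβ : 0 < β)
    (hcrit : α / β < 2 / (m - 1)) {y w : ℝ → ℝ} {t₀ : ℝ} (hsol : IsSolYW N m α β (Ici t₀) y w)
    (h₀ : (y t₀, w t₀) ∈ regionR N m α β) : Tendsto w atTop atTop := by
  have hR : ∀ t ∈ Ici t₀, (y t, w t) ∈ regionR N m α β := fun t ht =>
    mem_regionR_of_isSolYW hN hm hα hβ hcrit hsol ht Icc_subset_Ici_self h₀
  have hw := (monotoneOn_of_isSolYW hN hm hα hβ hcrit (convex_Ici t₀) hsol hR).2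
  have hw₀ := snd_pos_of_mem_regionR hN (by linarith) hα hβ h₀
  refine tendsto_atTop_of_le_hasDerivWithinAt_Ici
    (mul_pos hw₀ (two_sub_mul_pos hm hcrit le_rfl)) (fun t ht => (hsol t ht).2) fun t ht => ?_
  have hwt : w t₀ ≤ w t := hw self_mem_Ici (mem_Ici.2 ht.le) ht.le
  have hyt : y t < α / β := (hR t (mem_Ici.2 ht.le)).2.1
  exact mul_le_mul hwt (by nlinarith) (two_sub_mul_pos hm hcrit le_rfl).le (hw₀.trans_le hwt).le

theorem IsSolYW.exists_extension {t₀ b : ℝ} (hb : t₀ < b) {y w : ℝ → ℝ}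
    (hsol : IsSolYW N m α β (Ico t₀ b) y w) {yb wb : ℝ} (hy : Tendsto y (𝓝[<] b) (𝓝 yb))
    (hw : Tendsto w (𝓝[<] b) (𝓝 wb)) :
    ∃ c > b, ∃ y' w' : ℝ → ℝ, IsSolYW N m α β (Ico t₀ c) y' w' ∧
      EqOn y' y (Ico t₀ b) ∧ EqOn w' w (Ico t₀ b) := by
  obtain ⟨c, hc, η, hη, hηsol⟩ := exists_extend_hasDerivWithinAt_Ico hb
    contDiff_planarField.contDiffAt (isSolYW_iff.1 hsol) (hy.prodMk_nhds hw)
  refine ⟨c, hc, fun t => (η t).1, fun t => (η t).2, isSolYW_iff.2 hηsol,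
    fun t ht => congrArg Prod.fst (hη ht), fun t ht => congrArg Prod.snd (hη ht)⟩

theorem tendsto_nhdsLT_atTop_of_isSolYW_Ico (hN : 2 ≤ N) (hm : 1 < m) (hα : 0 < α) (hβ : 0 < β)
    (hcrit : α / β < 2 / (m - 1)) {y w : ℝ → ℝ} {t₀ b : ℝ} (hb : t₀ < b)
    (hsol : IsSolYW N m α β (Ico t₀ b) y w) (h₀ : (y t₀, w t₀) ∈ regionR N m α β)
    (hmax : ∀ c > b, ¬∃ y' w' : ℝ → ℝ, IsSolYW N m α β (Ico t₀ c) y' w' ∧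
      EqOn y' y (Ico t₀ b) ∧ EqOn w' w (Ico t₀ b)) :
    Tendsto w (𝓝[<] b) atTop := by
  have hR : ∀ t ∈ Ico t₀ b, (y t, w t) ∈ regionR N m α β := fun t ht =>
    mem_regionR_of_isSolYW hN hm hα hβ hcrit hsol ht.1 (Icc_subset_Ico_right ht.2) h₀
  obtain ⟨hy, hw⟩ := monotoneOn_of_isSolYW hN hm hα hβ hcrit (convex_Ico t₀ b) hsol hR
  refine hw.tendsto_nhdsLT_atTop fun hwbdd => ?_
  have hybdd : BddAbove (y '' Ico t₀ b) := ⟨α / β, by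
    rintro _ ⟨t, ht, rfl⟩
    exact (hR t ht).2.1.le⟩
  obtain ⟨yb, hyb⟩ := hy.exists_tendsto_nhdsLT hb hybdd
  obtain ⟨wb, hwb⟩ := hw.exists_tendsto_nhdsLT hb hwbdd
  obtain ⟨c, hc, hext⟩ := hsol.exists_extension hb hyb hwb
  exact hmax c hc hext

end PlanarSystem

theorem solDom_top (t₀ : ℝ) : solDom t₀ ⊤ = Ici t₀ := by
  ext t
  simp [solDom]

theorem solDom_coe (t₀ b : ℝ) : solDom t₀ b = Ico t₀ b := by
  ext t
  simp [solDom]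

theorem Icc_subset_solDom {t₀ t : ℝ} {b : EReal} (ht : t ∈ solDom t₀ b) :
    Icc t₀ t ⊆ solDom t₀ b :=
  fun _ hs => ⟨hs.1, (EReal.coe_le_coe_iff.2 hs.2).trans_lt ht.2⟩

theorem exponents_pos_and_ratio_lt {m σ p α β : ℝ} (hm : 1 < m) (hσ : -2 < σ)
    (hp : p < 1 - σ * (m - 1) / 2) (hα : α = -(σ + 2) / (σ * (m - 1) + 2 * (p - 1)))
    (hβ : β = -(m - p) / (σ * (m - 1) + 2 * (p - 1))) :
    0 < α ∧ 0 < β ∧ α / β < 2 / (m - 1) := by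
  have hD : σ * (m - 1) + 2 * (p - 1) < 0 := by linarith
  have hpm : p < m := by nlinarith
  have hα₀ : 0 < α := hα ▸ div_pos_of_neg_of_neg (by linarith) hD
  have hβ₀ : 0 < β := hβ ▸ div_pos_of_neg_of_neg (by linarith) hD
  have hkey : α * (m - 1) = 2 * β - 1 := by
    have := hD.ne
    rw [hα, hβ]
    field_simp
    ring
  refine ⟨hα₀, hβ₀, ?_⟩
  rw [div_lt_div_iff₀ hβ₀ (by linarith)]
  linarith

theorem invariant_region_z_eq_zero_general
    (N : ℕ) (hN : 2 ≤ N) (m σ p α β : ℝ)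
    (hm : 1 < m) (hσ1 : -2 < σ)
    (hp2 : p < 1 - σ * (m - 1) / 2)
    (hα : α = -(σ + 2) / (σ * (m - 1) + 2 * (p - 1)))
    (hβ : β = -(m - p) / (σ * (m - 1) + 2 * (p - 1))) :
    (α / β < 2 / (m - 1)) ∧
    (∀ q ∈ regionR N m α β,
      0 < -(((N : ℝ)) - 2) * q.1 + q.2 - m * q.1 ^ 2 - β / α * q.1 * q.2 ∧
      0 < q.2 * (2 - (m - 1) * q.1)) ∧
    (∀ (t₀ : ℝ) (b : EReal), (t₀ : EReal) < b → ∀ y w : ℝ → ℝ,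
      IsSolYW N m α β (solDom t₀ b) y w → (y t₀, w t₀) ∈ regionR N m α β →
      (∀ t ∈ solDom t₀ b, (y t, w t) ∈ regionR N m α β) ∧
      (∀ t ∈ solDom t₀ b, y t < α / β)) ∧
    (∀ (t₀ : ℝ) (b : EReal), (t₀ : EReal) < b → ∀ y w : ℝ → ℝ,
      IsSolYW N m α β (solDom t₀ b) y w → (y t₀, w t₀) ∈ regionR N m α β →
      (∀ b' : EReal, b < b' →
        ¬ ∃ y' w' : ℝ → ℝ, IsSolYW N m α β (solDom t₀ b') y' w' ∧
          Set.EqOn y' y (solDom t₀ b) ∧ Set.EqOn w' w (solDom t₀ b)) →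
      (b = ⊤ → Tendsto w atTop atTop) ∧
      (∀ br : ℝ, b = (br : EReal) → Tendsto w (𝓝[<] br) atTop)) := by
  obtain ⟨hα₀, hβ₀, hcrit⟩ := exponents_pos_and_ratio_lt hm hσ1 hp2 hα hβ
  have hinv : ∀ (t₀ : ℝ) (b : EReal) (y w : ℝ → ℝ), IsSolYW N m α β (solDom t₀ b) y w →
      (y t₀, w t₀) ∈ regionR N m α β → ∀ t ∈ solDom t₀ b, (y t, w t) ∈ regionR N m α β :=
    fun t₀ b y w hsol h₀ t ht =>
      mem_regionR_of_isSolYW hN hm hα₀ hβ₀ hcrit hsol ht.1 (Icc_subset_solDom ht) h₀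
  refine ⟨hcrit, fun q hq => planarField_pos_of_mem_regionR hN hm hα₀ hβ₀ hcrit hq,
    fun t₀ b _ y w hsol h₀ =>
      ⟨hinv t₀ b y w hsol h₀, fun t ht => (hinv t₀ b y w hsol h₀ t ht).2.1⟩,
    fun t₀ b hb y w hsol h₀ hmax => ⟨?_, ?_⟩⟩
  · rintro rfl
    rw [solDom_top] at hsol
    exact tendsto_atTop_of_isSolYW_Ici hN hm hα₀ hβ₀ hcrit hsol h₀
  · rintro br rfl
    rw [solDom_coe] at hsol hmax
    refine tendsto_nhdsLT_atTop_of_isSolYW_Ico hN hm hα₀ hβ₀ hcrit (EReal.coe_lt_coe_iff.1 hb)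
      hsol h₀ fun c hc => ?_
    simpa only [solDom_coe] using hmax c (EReal.coe_lt_coe_iff.2 hc)

/-- **Invariant region analysis in the plane `{z = 0}`.**
(i) `α/β < 2/(m-1)`; (ii) the vector field points up-right in `R`;
(iii) `R` is positively invariant; (iv) along any maximal solution starting in
`R`, `w → +∞` at the right endpoint of the maximal interval of existence. -/
theorem invariant_region_z_eq_zero
    (N : ℕ) (hN : 2 ≤ N) (m σ p α β : ℝ)
    (hm : 1 < m) (hσ1 : -2 < σ) (hσ2 : σ < 0)
    (hp1 : 1 < p) (hp2 : p < 1 - σ * (m - 1) / 2)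
    (hα : α = -(σ + 2) / (σ * (m - 1) + 2 * (p - 1)))
    (hβ : β = -(m - p) / (σ * (m - 1) + 2 * (p - 1))) :
    (α / β < 2 / (m - 1)) ∧
    (∀ q ∈ regionR N m α β,
      0 < -(((N : ℝ)) - 2) * q.1 + q.2 - m * q.1 ^ 2 - β / α * q.1 * q.2 ∧
      0 < q.2 * (2 - (m - 1) * q.1)) ∧
    (∀ (t₀ : ℝ) (b : EReal), (t₀ : EReal) < b → ∀ y w : ℝ → ℝ,
      IsSolYW N m α β (solDom t₀ b) y w → (y t₀, w t₀) ∈ regionR N m α β →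
      (∀ t ∈ solDom t₀ b, (y t, w t) ∈ regionR N m α β) ∧
      (∀ t ∈ solDom t₀ b, y t < α / β)) ∧
    (∀ (t₀ : ℝ) (b : EReal), (t₀ : EReal) < b → ∀ y w : ℝ → ℝ,
      IsSolYW N m α β (solDom t₀ b) y w → (y t₀, w t₀) ∈ regionR N m α β →
      (∀ b' : EReal, b < b' →
        ¬ ∃ y' w' : ℝ → ℝ, IsSolYW N m α β (solDom t₀ b') y' w' ∧
          Set.EqOn y' y (solDom t₀ b) ∧ Set.EqOn w' w (solDom t₀ b)) →
      (b = ⊤ → Tendsto w atTop atTop) ∧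
      (∀ br : ℝ, b = (br : EReal) → Tendsto w (𝓝[<] br) atTop)) :=
  invariant_region_z_eq_zero_general N hN m σ p α β hm hσ1 hp2 hα hβ
end

section
/- Let N ≥ 2 be an integer, m > 1, σ ∈ (−2, 0) and 1 ≤ p < m. Let f be a positive, continuously differentiable function on an interval (0, δ) such that lim_{ξ→0⁺} m ξ^{−(1+σ)} f(ξ)^{m−p−1} f'(ξ) = −1/(N+σ), and suppose f is bounded away from 0 near ξ = 0 (i.e. liminf_{ξ→0⁺} f(ξ) > 0). Then the limit D := lim_{ξ→0⁺} f(ξ)^{m−p} exists, is finite and positive, and lim_{ξ→0⁺} (D − f(ξ)^{m−p})/ξ^{σ+2} = (m−p)/(m(N+σ)(σ+2)); that is, f has the local behavior f(ξ) ∼ [D − ((m−p)/(m(N+σ)(σ+2))) ξ^{σ+2}]^{1/(m−p)} as ξ → 0⁺. -/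
open Real Filter Set Topology

/-!
With `g = f ^ (m - p)` and `ψ ξ = ξ ^ (σ + 2)`, the hypothesis says exactly that
`g' / ψ' → -(m - p) / (m (N + σ) (σ + 2))`. A bounded ratio `g' / ψ'` with `ψ' > 0` gives
`|g x - g y| ≤ M |ψ x - ψ y|`, so `g` is Cauchy at `0⁺` because `ψ` converges there; once the limit
`D` is known, L'Hôpital's rule for `g - D` and `ψ` gives the rate. `D > 0` because `f` is bounded
away from `0`.
-/

theorem dist_le_dist_of_norm_deriv_le_deriv {E : Type*} [NormedAddCommGroup E] [NormedSpace ℝ E]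
    {a b : ℝ} {g g' : ℝ → E} {ψ ψ' : ℝ → ℝ}
    (hg : ∀ x ∈ Ioo a b, HasDerivAt g (g' x) x) (hψ : ∀ x ∈ Ioo a b, HasDerivAt ψ (ψ' x) x)
    (hle : ∀ x ∈ Ioo a b, ‖g' x‖ ≤ ψ' x) {x y : ℝ} (hx : x ∈ Ioo a b) (hy : y ∈ Ioo a b) :
    dist (g x) (g y) ≤ dist (ψ x) (ψ y) := by
  wlog hxy : x ≤ y generalizing x y
  · rw [dist_comm, dist_comm (ψ x)]
    exact this hy hx (le_of_not_ge hxy)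
  have hsub : Icc x y ⊆ Ioo a b := Icc_subset_Ioo hx.1 hy.2
  have hIco : ∀ t ∈ Ico x y, t ∈ Ioo a b := fun t ht => hsub (Ico_subset_Icc_self ht)
  have key := image_norm_le_of_norm_deriv_right_le_deriv_boundary'
    (f := fun t => g t - g x) (B := fun t => ψ t - ψ x)
    (fun t ht => ((hg t (hsub ht)).continuousAt.sub continuousAt_const).continuousWithinAt)
    (fun t ht => ((hg t (hIco t ht)).sub_const (g x)).hasDerivWithinAt)
    (by simp)
    (fun t ht => ((hψ t (hsub ht)).continuousAt.sub continuousAt_const).continuousWithinAt)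
    (fun t ht => ((hψ t (hIco t ht)).sub_const (ψ x)).hasDerivWithinAt)
    (fun t ht => hle t (hIco t ht)) (right_mem_Icc.2 hxy)
  rw [dist_comm, dist_eq_norm]
  exact key.trans ((le_abs_self _).trans (abs_sub_comm _ _).le)

theorem exists_tendsto_nhdsGT_of_norm_deriv_le_deriv {E : Type*} [NormedAddCommGroup E]
    [NormedSpace ℝ E] [CompleteSpace E] {a L : ℝ} {g g' : ℝ → E} {ψ ψ' : ℝ → ℝ}
    (hg : ∀ᶠ x in 𝓝[>] a, HasDerivAt g (g' x) x) (hψ : ∀ᶠ x in 𝓝[>] a, HasDerivAt ψ (ψ' x) x)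
    (hle : ∀ᶠ x in 𝓝[>] a, ‖g' x‖ ≤ ψ' x) (hψL : Tendsto ψ (𝓝[>] a) (𝓝 L)) :
    ∃ D, Tendsto g (𝓝[>] a) (𝓝 D) := by
  obtain ⟨b, hab, hb⟩ := mem_nhdsGT_iff_exists_Ioo_subset.1 ((hg.and hψ).and hle)
  refine cauchy_map_iff_exists_tendsto.1 (cauchy_map_iff'.2 ?_)
  have hψC : Tendsto (fun p : ℝ × ℝ => dist (ψ p.1) (ψ p.2)) (𝓝[>] a ×ˢ 𝓝[>] a) (𝓝 0) :=
    tendsto_uniformity_iff_dist_tendsto_zero.1 (cauchy_map_iff'.1 hψL.cauchy_map)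
  refine tendsto_uniformity_iff_dist_tendsto_zero.2
    (squeeze_zero' (Eventually.of_forall fun _ => dist_nonneg) ?_ hψC)
  have hIoo : Ioo a b ∈ 𝓝[>] a := Ioo_mem_nhdsGT hab
  filter_upwards [prod_mem_prod hIoo hIoo] with p hp
  exact dist_le_dist_of_norm_deriv_le_deriv (fun x hx => (hb hx).1.1) (fun x hx => (hb hx).1.2)
    (fun x hx => (hb hx).2) hp.1 hp.2

theorem exists_tendsto_nhdsGT_and_tendsto_sub_div_of_tendsto_deriv_div {a ℓ : ℝ}
    {g g' ψ ψ' : ℝ → ℝ}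
    (hg : ∀ᶠ x in 𝓝[>] a, HasDerivAt g (g' x) x) (hψ : ∀ᶠ x in 𝓝[>] a, HasDerivAt ψ (ψ' x) x)
    (hψ' : ∀ᶠ x in 𝓝[>] a, 0 < ψ' x) (hψ0 : Tendsto ψ (𝓝[>] a) (𝓝 0))
    (hdiv : Tendsto (fun x => g' x / ψ' x) (𝓝[>] a) (𝓝 ℓ)) :
    ∃ D, Tendsto g (𝓝[>] a) (𝓝 D) ∧
      Tendsto (fun x => (g x - D) / ψ x) (𝓝[>] a) (𝓝 ℓ) := by
  have hbound : ∀ᶠ x in 𝓝[>] a, ‖g' x‖ ≤ (|ℓ| + 1) * ψ' x := by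
    filter_upwards [hψ', (tendsto_norm.comp hdiv).eventually (gt_mem_nhds (lt_add_one |ℓ|))]
      with x hx hlt
    rw [Function.comp_apply, norm_div, Real.norm_of_nonneg hx.le, div_lt_iff₀ hx] at hlt
    exact hlt.le
  obtain ⟨D, hD⟩ := exists_tendsto_nhdsGT_of_norm_deriv_le_deriv hg
    (hψ.mono fun x hx => hx.const_mul (|ℓ| + 1)) hbound (hψ0.const_mul (|ℓ| + 1))
  refine ⟨D, hD, HasDerivAt.lhopital_zero_nhdsGT (hg.mono fun x hx => hx.sub_const D) hψ
    (hψ'.mono fun x hx => hx.ne') ?_ hψ0 hdiv⟩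
  simpa using hD.sub_const D

theorem tendsto_deriv_rpow_div_deriv_rpow_of_tendsto {f : ℝ → ℝ} {m p σ ℓ : ℝ} (hm : m ≠ 0)
    (hlim : Tendsto (fun ξ => m * ξ ^ (-(1 + σ)) * f ξ ^ (m - p - 1) * deriv f ξ) (𝓝[>] 0) (𝓝 ℓ)) :
    Tendsto (fun ξ => deriv f ξ * (m - p) * f ξ ^ (m - p - 1) / ((σ + 2) * ξ ^ (σ + 1)))
      (𝓝[>] 0) (𝓝 ((m - p) / (m * (σ + 2)) * ℓ)) := by
  refine (hlim.const_mul ((m - p) / (m * (σ + 2)))).congr' ?_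
  filter_upwards [self_mem_nhdsWithin] with ξ (hξ : 0 < ξ)
  rw [show -(1 + σ) = -(σ + 1) by ring, rpow_neg hξ.le]
  have := (rpow_pos_of_pos hξ (σ + 1)).ne'
  field_simp

theorem local_behavior_from_YZ_limit_general
    (N : ℕ) (m σ p : ℝ)
    (hm : 1 < m) (hσ1 : -2 < σ)
    (hpm : p < m)
    (δ : ℝ) (hδ : 0 < δ) (f : ℝ → ℝ)
    (hf1 : ContDiffOn ℝ 1 f (Set.Ioo 0 δ))
    (hlim : Tendsto (fun ξ => m * ξ ^ (-(1 + σ)) * f ξ ^ (m - p - 1) * deriv f ξ)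
      (𝓝[>] 0) (𝓝 (-1 / ((N : ℝ) + σ))))
    (hbdd : ∃ c > (0 : ℝ), ∀ᶠ ξ in 𝓝[>] (0 : ℝ), c ≤ f ξ) :
    ∃ D : ℝ, 0 < D ∧
      Tendsto (fun ξ => f ξ ^ (m - p)) (𝓝[>] 0) (𝓝 D) ∧
      Tendsto (fun ξ => (D - f ξ ^ (m - p)) / ξ ^ (σ + 2)) (𝓝[>] 0)
        (𝓝 ((m - p) / (m * ((N : ℝ) + σ) * (σ + 2)))) := by
  obtain ⟨c, hc, hcf⟩ := hbdd
  have hσ : 0 < σ + 2 := by linarith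
  have hpos : ∀ᶠ ξ in 𝓝[>] (0 : ℝ), 0 < ξ := self_mem_nhdsWithin
  have hg : ∀ᶠ ξ in 𝓝[>] (0 : ℝ), HasDerivAt (fun ξ => f ξ ^ (m - p))
      (deriv f ξ * (m - p) * f ξ ^ (m - p - 1)) ξ := by
    filter_upwards [Ioo_mem_nhdsGT hδ, hcf] with ξ hξ hcξ
    exact ((hf1.differentiableOn one_ne_zero).differentiableAt (Ioo_mem_nhds hξ.1 hξ.2)).hasDerivAt
      |>.rpow_const (Or.inl (hc.trans_le hcξ).ne')
  have hψ : ∀ᶠ ξ in 𝓝[>] (0 : ℝ),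
      HasDerivAt (fun ξ : ℝ => ξ ^ (σ + 2)) ((σ + 2) * ξ ^ (σ + 1)) ξ := by
    filter_upwards [hpos] with ξ hξ
    simpa [show σ + 2 - 1 = σ + 1 by ring] using
      Real.hasDerivAt_rpow_const (p := σ + 2) (Or.inl hξ.ne')
  have hψ' : ∀ᶠ ξ in 𝓝[>] (0 : ℝ), 0 < (σ + 2) * ξ ^ (σ + 1) :=
    hpos.mono fun ξ hξ => mul_pos hσ (rpow_pos_of_pos hξ _)
  have hψ0 : Tendsto (fun ξ : ℝ => ξ ^ (σ + 2)) (𝓝[>] 0) (𝓝 0) := by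
    simpa [zero_rpow hσ.ne'] using
      (continuousAt_rpow_const 0 (σ + 2) (Or.inr hσ.le)).tendsto.mono_left nhdsWithin_le_nhds
  have hdiv := tendsto_deriv_rpow_div_deriv_rpow_of_tendsto (zero_lt_one.trans hm).ne' hlim
  rw [div_mul_div_comm, mul_neg_one, neg_div, mul_right_comm] at hdiv
  obtain ⟨D, hD, hrate⟩ :=
    exists_tendsto_nhdsGT_and_tendsto_sub_div_of_tendsto_deriv_div hg hψ hψ' hψ0 hdiv
  refine ⟨D, ?_, hD, ?_⟩
  · refine (rpow_pos_of_pos hc (m - p)).trans_le (ge_of_tendsto hD ?_)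
    filter_upwards [hcf] with ξ hcξ
    exact rpow_le_rpow hc.le hcξ (sub_nonneg.2 hpm.le)
  · simpa only [← neg_div, neg_sub, neg_neg] using hrate.neg

/-- **Local behavior (beh.Q1) from the phase-space asymptotics `Y/Z → -1/(N+σ)`.**
If `f` is positive, `C¹` on `(0, δ)`, bounded away from `0` near `ξ = 0`, and
`m ξ^{-(1+σ)} f(ξ)^{m-p-1} f'(ξ) → -1/(N+σ)` as `ξ → 0⁺`, then
`D = lim_{ξ→0⁺} f(ξ)^{m-p}` exists, is finite and positive, and
`(D - f(ξ)^{m-p})/ξ^{σ+2} → (m-p)/(m(N+σ)(σ+2))` as `ξ → 0⁺`. -/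
theorem local_behavior_from_YZ_limit
    (N : ℕ) (hN : 2 ≤ N) (m σ p : ℝ)
    (hm : 1 < m) (hσ1 : -2 < σ) (hσ2 : σ < 0)
    (hp1 : 1 ≤ p) (hpm : p < m)
    (δ : ℝ) (hδ : 0 < δ) (f : ℝ → ℝ)
    (hf1 : ContDiffOn ℝ 1 f (Set.Ioo 0 δ))
    (hfpos : ∀ ξ ∈ Set.Ioo 0 δ, 0 < f ξ)
    (hlim : Tendsto (fun ξ => m * ξ ^ (-(1 + σ)) * f ξ ^ (m - p - 1) * deriv f ξ)
      (𝓝[>] 0) (𝓝 (-1 / ((N : ℝ) + σ))))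
    (hbdd : ∃ c > (0 : ℝ), ∀ᶠ ξ in 𝓝[>] (0 : ℝ), c ≤ f ξ) :
    ∃ D : ℝ, 0 < D ∧
      Tendsto (fun ξ => f ξ ^ (m - p)) (𝓝[>] 0) (𝓝 D) ∧
      Tendsto (fun ξ => (D - f ξ ^ (m - p)) / ξ ^ (σ + 2)) (𝓝[>] 0)
        (𝓝 ((m - p) / (m * ((N : ℝ) + σ) * (σ + 2)))) :=
  local_behavior_from_YZ_limit_general N m σ p hm hσ1 hpm δ hδ f hf1 hlim hbdd
end

section
/- Let m > 1 and β > 0. Let ξ₀ > 0 and let f be a positive, continuously differentiable function on an interval (ξ₁, ξ₀) with lim_{ξ→ξ₀⁻} f(ξ) = 0 and lim_{ξ→ξ₀⁻} m f(ξ)^{m−2} f'(ξ)/ξ = −β. Then lim_{ξ→ξ₀⁻} f(ξ)^{m−1}/(ξ₀² − ξ²) = β(m−1)/(2m); equivalently, setting C := β(m−1)ξ₀²/(2m), one has f(ξ) ∼ [C − (β(m−1)/(2m)) ξ²]^{1/(m−1)} as ξ → ξ₀⁻. In particular lim_{ξ→ξ₀⁻} (f^m)'(ξ) = 0, so f satisfies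 the interface contact condition at ξ₀. -/
open Real Filter Set Topology

/-!
Near the vanishing point `f^{m-1}` and `ξ₀² - ξ²` both tend to `0`, and the quotient of their
derivatives, `(m-1) f^{m-2} f' / (-2ξ)`, is a constant multiple of the quantity
`m f^{m-2} f' / ξ → -β`; l'Hôpital's rule gives the first limit. For the contact condition,
`(f^m)' = (m f^{m-2} f' / ξ) · ξ f` is a bounded factor times a factor tending to `0`.
-/

lemma eventually_ne_zero_nhdsLT (a : ℝ) : ∀ᶠ x in 𝓝[<] a, x ≠ 0 := by
  rcases le_or_gt a 0 with ha | ha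
  · filter_upwards [self_mem_nhdsWithin] with x hx
    exact (lt_of_lt_of_le hx ha).ne
  · exact (eventually_ne_nhds ha.ne').filter_mono nhdsWithin_le_nhds

lemma tendsto_sq_sub_sq_nhdsLT (a : ℝ) :
    Tendsto (fun x : ℝ => a ^ 2 - x ^ 2) (𝓝[<] a) (𝓝 0) := by
  have h : Tendsto (fun x : ℝ => a ^ 2 - x ^ 2) (𝓝 a) (𝓝 (a ^ 2 - a ^ 2)) :=
    (continuous_const.sub (continuous_pow 2)).tendsto a
  rw [sub_self] at h
  exact h.mono_left nhdsWithin_le_nhds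

section LeftLimits

variable {f f' : ℝ → ℝ} {a : ℝ}

lemma tendsto_rpow_div_sq_sub_sq_nhdsLT {p L : ℝ} (hp : 0 < p)
    (hderiv : ∀ᶠ x in 𝓝[<] a, HasDerivAt f (f' x) x) (hpos : ∀ᶠ x in 𝓝[<] a, 0 < f x)
    (hf0 : Tendsto f (𝓝[<] a) (𝓝 0))
    (hslope : Tendsto (fun x => f x ^ (p - 1) * f' x / x) (𝓝[<] a) (𝓝 L)) :
    Tendsto (fun x => f x ^ p / (a ^ 2 - x ^ 2)) (𝓝[<] a) (𝓝 (-(p * L) / 2)) := by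
  have hfp0 : Tendsto (fun x => f x ^ p) (𝓝[<] a) (𝓝 0) := by
    simpa [zero_rpow hp.ne'] using hf0.rpow_const (Or.inr hp.le)
  refine HasDerivAt.lhopital_zero_nhdsLT (f' := fun x => f' x * p * f x ^ (p - 1))
    (g' := fun x => -(2 * x)) ?_ ?_ ?_ hfp0 (tendsto_sq_sub_sq_nhdsLT a) ?_
  · filter_upwards [hderiv, hpos] with x hfx hx
    exact hfx.rpow_const (Or.inl hx.ne')
  · refine Eventually.of_forall fun x => ?_
    simpa using ((hasDerivAt_id x).pow 2).const_sub (a ^ 2)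
  · filter_upwards [eventually_ne_zero_nhdsLT a] with x hx
    simpa using hx
  · have hquot : ∀ᶠ x in 𝓝[<] a,
        -(p / 2) * (f x ^ (p - 1) * f' x / x) = f' x * p * f x ^ (p - 1) / -(2 * x) := by
      filter_upwards [eventually_ne_zero_nhdsLT a] with x hx
      field_simp
    convert (hslope.const_mul (-(p / 2))).congr' hquot using 2
    ring

lemma tendsto_deriv_rpow_nhdsLT {m L : ℝ}
    (hderiv : ∀ᶠ x in 𝓝[<] a, HasDerivAt f (f' x) x) (hpos : ∀ᶠ x in 𝓝[<] a, 0 < f x)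
    (hf0 : Tendsto f (𝓝[<] a) (𝓝 0))
    (hslope : Tendsto (fun x => m * f x ^ (m - 2) * f' x / x) (𝓝[<] a) (𝓝 L)) :
    Tendsto (fun x => deriv (fun y => f y ^ m) x) (𝓝[<] a) (𝓝 0) := by
  have hfactor : ∀ᶠ x in 𝓝[<] a,
      m * f x ^ (m - 2) * f' x / x * (x * f x) = deriv (fun y => f y ^ m) x := by
    filter_upwards [hderiv, hpos, eventually_ne_zero_nhdsLT a] with x hfx hfpos hx
    have hsplit : f x ^ (m - 1) = f x ^ (m - 2) * f x := by
      rw [← rpow_add_one hfpos.ne']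
      ring_nf
    rw [(hfx.rpow_const (Or.inl hfpos.ne')).deriv, hsplit]
    field_simp
  have hxf : Tendsto (fun x => x * f x) (𝓝[<] a) (𝓝 0) := by
    simpa using (tendsto_id.mono_left nhdsWithin_le_nhds).mul hf0
  simpa using (hslope.mul hxf).congr' hfactor

end LeftLimits

theorem interface_behavior_general
    (m β : ℝ) (hm : 1 < m)
    (ξ₀ ξ₁ : ℝ) (hξ₁ : ξ₁ < ξ₀)
    (f : ℝ → ℝ)
    (hf1 : ContDiffOn ℝ 1 f (Set.Ioo ξ₁ ξ₀))
    (hfpos : ∀ ξ ∈ Set.Ioo ξ₁ ξ₀, 0 < f ξ)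
    (hf0 : Tendsto f (𝓝[<] ξ₀) (𝓝 0))
    (hslope : Tendsto (fun ξ => m * f ξ ^ (m - 2) * deriv f ξ / ξ)
      (𝓝[<] ξ₀) (𝓝 (-β))) :
    Tendsto (fun ξ => f ξ ^ (m - 1) / (ξ₀ ^ 2 - ξ ^ 2)) (𝓝[<] ξ₀)
      (𝓝 (β * (m - 1) / (2 * m))) ∧
    Tendsto (fun ξ => deriv (fun x => f x ^ m) ξ) (𝓝[<] ξ₀) (𝓝 0) := by
  have hIoo : Ioo ξ₁ ξ₀ ∈ 𝓝[<] ξ₀ := Ioo_mem_nhdsLT hξ₁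
  have hderiv : ∀ᶠ ξ in 𝓝[<] ξ₀, HasDerivAt f (deriv f ξ) ξ := by
    filter_upwards [hIoo] with ξ hξ
    exact ((hf1.differentiableOn one_ne_zero).differentiableAt
      (isOpen_Ioo.mem_nhds hξ)).hasDerivAt
  have hpos : ∀ᶠ ξ in 𝓝[<] ξ₀, 0 < f ξ := Filter.mem_of_superset hIoo hfpos
  have hm0 : m ≠ 0 := by linarith
  have hslope' : Tendsto (fun ξ => f ξ ^ (m - 1 - 1) * deriv f ξ / ξ) (𝓝[<] ξ₀)
      (𝓝 (m⁻¹ * -β)) := by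
    convert hslope.const_mul m⁻¹ using 2 with ξ
    field_simp
    ring_nf
  refine ⟨?_, tendsto_deriv_rpow_nhdsLT hderiv hpos hf0 hslope⟩
  convert tendsto_rpow_div_sq_sub_sq_nhdsLT (by linarith) hderiv hpos hf0 hslope' using 2
  field_simp

/-- **Interface behavior near `P₁`.** If `f > 0` is `C¹` on `(ξ₁, ξ₀)`,
`f(ξ) → 0` and `m f(ξ)^{m-2} f'(ξ)/ξ → -β` as `ξ → ξ₀⁻`, then
`f(ξ)^{m-1}/(ξ₀² - ξ²) → β(m-1)/(2m)` as `ξ → ξ₀⁻` (that is,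
`f(ξ) ∼ [C - (β(m-1)/(2m)) ξ²]^{1/(m-1)}` with `C = β(m-1)ξ₀²/(2m)`), and in
particular `(f^m)'(ξ) → 0` as `ξ → ξ₀⁻`, so `f` satisfies the interface
contact condition at `ξ₀`. -/
theorem interface_behavior
    (m β : ℝ) (hm : 1 < m) (hβ : 0 < β)
    (ξ₀ ξ₁ : ℝ) (hξ₀ : 0 < ξ₀) (hξ₁ : ξ₁ < ξ₀)
    (f : ℝ → ℝ)
    (hf1 : ContDiffOn ℝ 1 f (Set.Ioo ξ₁ ξ₀))
    (hfpos : ∀ ξ ∈ Set.Ioo ξ₁ ξ₀, 0 < f ξ)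
    (hf0 : Tendsto f (𝓝[<] ξ₀) (𝓝 0))
    (hslope : Tendsto (fun ξ => m * f ξ ^ (m - 2) * deriv f ξ / ξ)
      (𝓝[<] ξ₀) (𝓝 (-β))) :
    Tendsto (fun ξ => f ξ ^ (m - 1) / (ξ₀ ^ 2 - ξ ^ 2)) (𝓝[<] ξ₀)
      (𝓝 (β * (m - 1) / (2 * m))) ∧
    Tendsto (fun ξ => deriv (fun x => f x ^ m) ξ) (𝓝[<] ξ₀) (𝓝 0) :=
  interface_behavior_general m β hm ξ₀ ξ₁ hξ₁ f hf1 hfpos hf0 hslope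
end
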